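/- arXiv:2204.12903 — 3 statements merged into one kernel-verified Lean document; each statement's English description precedes it below -/
import Mathlib

section
/- Let X be a type of databases with adjacency relation Adj, and let (Mᵢ : X → PMF R)_{i ∈ Finset.range n} be a finite family of randomized mechanisms with a common countable output type R, where each Mᵢ is εᵢ-differentially private with respect to Adj (εᵢ ≥ 0). Then the joint mechanism M : X → PMF (Fin n → R), obtained by running all n mechanisms independently on the same input (i.e., the product of the n probability mass functions built by sequentially binding M₀ x, M₁ x, …, M_{n−1} x), is (∑ i, εᵢ)-differentially private: for all x y with Adj x y and every output vector v : Fin n → R, (M x) v ≤ Real.exp (∑ i, εᵢ) * (M y) v. -/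
/-! The sequentially bound product `piPMF n p` gives the vector `v` the mass `∏ i, p i (v i)`.
Applying each mechanism's DP bound factor by factor therefore bounds the joint mass by
`∏ i, exp (ε i)` times the joint mass at the neighbour, and `∏ i, exp (ε i) = exp (∑ i, ε i)`. -/

/-- A mechanism `M : X → PMF R` is `ε`-differentially private w.r.t. the
adjacency relation `Adj` if for all neighboring databases `x, y` and every
output `r`, `(M x) r ≤ exp ε * (M y) r`. -/
def IsDP {X R : Type*} (Adj : X → X → Prop) (ε : ℝ) (M : X → PMF R) : Prop :=
  ∀ x y, Adj x y → ∀ r : R, (M x) r ≤ ENNReal.ofReal (Real.exp ε) * (M y) r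

/-- The product of `n` probability mass functions, built by sequentially
binding them: running all of them independently and returning the vector of
outcomes. -/
noncomputable def piPMF {R : Type*} : (n : ℕ) → (Fin n → PMF R) → PMF (Fin n → R)
  | 0, _ => PMF.pure (fun i => i.elim0)
  | n + 1, p =>
      (p 0).bind (fun r => (piPMF n (fun i => p i.succ)).map (fun v => Fin.cons r v))

theorem piPMF_apply {R : Type*} (n : ℕ) (p : Fin n → PMF R) (v : Fin n → R) :
    piPMF n p v = ∏ i, p i (v i) := by
  induction n with
  | zero => simp [piPMF, PMF.pure_apply, Subsingleton.elim v fun i => i.elim0]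
  | succ n ih =>
    rw [Fin.prod_univ_succ, ← ih, piPMF, PMF.bind_apply, tsum_eq_single (v 0)]
    · rw [PMF.map_apply, tsum_eq_single (Fin.tail v)]
      · rw [if_pos (Fin.cons_self_tail v).symm]
        rfl
      · rintro w hw
        exact if_neg fun h => hw (by rw [h, Fin.tail_cons])
    · intro r hr
      rw [PMF.map_apply, ENNReal.summable.tsum_eq_zero_iff.mpr, mul_zero]
      exact fun w => if_neg fun h => hr (by rw [h, Fin.cons_zero])

theorem ENNReal.ofReal_exp_sum {ι : Type*} (s : Finset ι) (f : ι → ℝ) :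
    ENNReal.ofReal (Real.exp (∑ i ∈ s, f i)) = ∏ i ∈ s, ENNReal.ofReal (Real.exp (f i)) := by
  rw [Real.exp_sum, ENNReal.ofReal_prod_of_nonneg fun i _ => (Real.exp_pos _).le]

theorem dp_nfold_composition_general {X R : Type*}
    (Adj : X → X → Prop) (n : ℕ) (ε : Fin n → ℝ)
    (M : Fin n → X → PMF R) (hM : ∀ i, IsDP Adj (ε i) (M i)) :
    IsDP Adj (∑ i, ε i) (fun x => piPMF n (fun i => M i x)) := by
  intro x y hxy v
  calc piPMF n (fun i => M i x) v = ∏ i, M i x (v i) := piPMF_apply n _ v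
    _ ≤ ∏ i, ENNReal.ofReal (Real.exp (ε i)) * M i y (v i) :=
      Finset.prod_le_prod' fun i _ => hM i x y hxy (v i)
    _ = ENNReal.ofReal (Real.exp (∑ i, ε i)) * piPMF n (fun i => M i y) v := by
      rw [Finset.prod_mul_distrib, ENNReal.ofReal_exp_sum, piPMF_apply]

/-- n-fold composition: running `n` mechanisms `M i`, each `ε i`-DP,
independently on the same input yields a `(∑ i, ε i)`-DP mechanism. -/
theorem dp_nfold_composition {X R : Type*} [Countable R]
    (Adj : X → X → Prop) (n : ℕ) (ε : Fin n → ℝ) (hε : ∀ i, 0 ≤ ε i)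
    (M : Fin n → X → PMF R) (hM : ∀ i, IsDP Adj (ε i) (M i)) :
    IsDP Adj (∑ i, ε i) (fun x => piPMF n (fun i => M i x)) :=
  dp_nfold_composition_general Adj n ε M hM
end

section
/- Let X be a type of databases with adjacency relation Adj, let ε > 0, let 0 < α < 1 and β : ℕ with β > 0. Suppose: (i) S : X → PMF R₀ is ε_S-differentially private, (ii) C⋆ : X → PMF R₀ is ε_{f⋆}-differentially private, (iii) for each i ∈ Fin β, Cᵢ : X → PMF R₀ is (((1 − α)·ε)/β)-differentially private, all with respect to Adj, and (iv) ε_S + ε_{f⋆} = α·ε. Then the combined SuperQUAIL mechanism — running S, C⋆, and all β mechanisms Cᵢ independently on the same input and returning the tuple of all β + 2 outputs — is ε-differentially private: for all x y with Adj x y and every output tuple t, the probability of t under the combined mechanism on x is at most Real.exp ε times its probability on y (using that β·((1 − α)·ε/β) + ε_S + ε_{f⋆} = ε). -/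
/-!
The mass of a bind is a sum of products, so pointwise privacy bounds multiply and the
budgets of mechanisms run one after another add up (adaptive composition); post-processing
costs nothing. Running `S`, `C⋆` and the `β` classifiers in sequence therefore costs
`ε_S + ε_{f⋆} + β · ((1 - α) ε / β) = α ε + (1 - α) ε = ε`.
-/

namespace IsDP

variable {X A B : Type*} {Adj : X → X → Prop}

theorem const (Adj : X → X → Prop) (p : PMF A) : IsDP Adj 0 (fun _ => p) := by
  intro x y _ r
  simp

theorem bind {ε₁ ε₂ : ℝ} {M : X → PMF A} {F : X → A → PMF B}
    (hM : IsDP Adj ε₁ M) (hF : ∀ a, IsDP Adj ε₂ (fun x => F x a)) :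
    IsDP Adj (ε₁ + ε₂) (fun x => (M x).bind (F x)) := by
  intro x y hxy b
  simp only [PMF.bind_apply]
  calc ∑' a, M x a * F x a b
      ≤ ∑' a, (ENNReal.ofReal (Real.exp ε₁) * M y a) *
          (ENNReal.ofReal (Real.exp ε₂) * F y a b) :=
        ENNReal.tsum_le_tsum fun a => mul_le_mul' (hM x y hxy a) (hF a x y hxy b)
    _ = ENNReal.ofReal (Real.exp (ε₁ + ε₂)) * ∑' a, M y a * F y a b := by
        rw [Real.exp_add, ENNReal.ofReal_mul (Real.exp_pos _).le, ← ENNReal.tsum_mul_left]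
        congr 1 with a
        ring

theorem map {ε : ℝ} {M : X → PMF A} (f : A → B) (hM : IsDP Adj ε M) :
    IsDP Adj ε (fun x => (M x).map f) := by
  have h := hM.bind (F := fun _ a => PMF.pure (f a)) fun a => const Adj _
  rwa [add_zero] at h

theorem piPMF {R : Type*} :
    ∀ {n : ℕ} {ε : Fin n → ℝ} {M : Fin n → X → PMF R}, (∀ i, IsDP Adj (ε i) (M i)) →
      IsDP Adj (∑ i, ε i) (fun x => _root_.piPMF n (fun i => M i x))
  | 0, _, _, _ => by
      simpa [_root_.piPMF] using const Adj (PMF.pure fun i : Fin 0 => i.elim0)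
  | n + 1, ε, M, hM => by
      have htail := piPMF (ε := fun i => ε i.succ) (M := fun i => M i.succ) fun i => hM i.succ
      rw [Fin.sum_univ_succ]
      exact (hM 0).bind fun r => htail.map fun v => (Fin.cons r v : Fin (n + 1) → R)

end IsDP

theorem superquail_is_dp_general {X R₀ : Type*}
    (Adj : X → X → Prop) (ε α : ℝ) (β : ℕ)
    (hβ : 0 < β)
    (εS εf : ℝ)
    (S : X → PMF R₀) (Cstar : X → PMF R₀) (C : Fin β → X → PMF R₀)
    (hS : IsDP Adj εS S)
    (hCstar : IsDP Adj εf Cstar)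
    (hC : ∀ i, IsDP Adj ((1 - α) * ε / β) (C i))
    (hsplit : εS + εf = α * ε) :
    IsDP Adj ε
      (fun x => (S x).bind (fun s =>
        (Cstar x).bind (fun c =>
          (piPMF β (fun i => C i x)).map (fun v => (s, c, v))))) := by
  have hbudget : εS + (εf + ∑ _i : Fin β, (1 - α) * ε / β) = ε := by
    have hβ' : (β : ℝ) ≠ 0 := Nat.cast_ne_zero.mpr hβ.ne'
    rw [Finset.sum_const, Finset.card_univ, Fintype.card_fin, nsmul_eq_mul,
      mul_div_cancel₀ _ hβ']
    linarith
  rw [← hbudget]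
  exact hS.bind fun s => hCstar.bind fun c => (IsDP.piPMF hC).map fun v => (s, c, v)

/-- Privacy of SuperQUAIL: the synthesizer `S` (budget `ε_S`) and the
target-feature classifier `C⋆` (budget `ε_{f⋆}`) together consume the DPSAGE
share `α·ε` of the budget, and each of the `β` per-feature classifiers `Cᵢ`
consumes `((1−α)·ε)/β`; running all of them independently and returning the
tuple of all `β + 2` outputs is `ε`-differentially private. -/
theorem superquail_is_dp {X R₀ : Type*} [Countable R₀]
    (Adj : X → X → Prop) (ε α : ℝ) (β : ℕ)
    (hε : 0 < ε) (hα₀ : 0 < α) (hα₁ : α < 1) (hβ : 0 < β)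
    (εS εf : ℝ)
    (S : X → PMF R₀) (Cstar : X → PMF R₀) (C : Fin β → X → PMF R₀)
    (hS : IsDP Adj εS S)
    (hCstar : IsDP Adj εf Cstar)
    (hC : ∀ i, IsDP Adj ((1 - α) * ε / β) (C i))
    (hsplit : εS + εf = α * ε) :
    IsDP Adj ε
      (fun x => (S x).bind (fun s =>
        (Cstar x).bind (fun c =>
          (piPMF β (fun i => C i x)).map (fun v => (s, c, v))))) :=
  superquail_is_dp_general Adj ε α β hβ εS εf S Cstar C hS hCstar hC hsplit
end

section
/- Let X be a type of databases with adjacency relation Adj. Let M₁ : X → PMF R₁ be ε₁-differentially private, and let M₂ : X → R₁ → PMF R₂ be a family of mechanisms such that for every fixed prior output r₁ : R₁, the mechanism x ↦ M₂ x r₁ is ε₂-differentially private with respect to Adj. Then the adaptive (sequential) composition M : X → PMF (R₁ × R₂), defined by M x = (M₁ x).bind (fun r₁ => (M₂ x r₁).map (fun r₂ => (r₁, r₂))), is (ε₁ + ε₂)-differentially private: for all x y with Adj x y and all (r₁, r₂), (M x) (r₁, r₂) ≤ Real.exp (ε₁ + ε₂) * (M y) (r₁, r₂). -/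
namespace PMF

variable {α β : Type*}

theorem map_apply_of_injective (p : PMF α) {f : α → β} (hf : f.Injective) (a : α) :
    p.map f (f a) = p a := by
  rw [map_apply, tsum_eq_single a]
  · simp
  · intro a' ha'
    simp [hf.ne ha'.symm]

theorem map_apply_eq_zero_of_notMem_range (p : PMF α) {f : α → β} {b : β}
    (hb : b ∉ Set.range f) : p.map f b = 0 := by
  rw [apply_eq_zero_iff, support_map]
  exact fun ⟨a, _, hab⟩ => hb ⟨a, hab⟩

theorem bind_map_prodMk_apply (p : PMF α) (q : α → PMF β) (a : α) (b : β) :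
    (p.bind fun a => (q a).map fun b => (a, b)) (a, b) = p a * q a b := by
  rw [bind_apply, tsum_eq_single a]
  · rw [map_apply_of_injective _ (Prod.mk_right_injective a)]
  · intro a' ha'
    rw [map_apply_eq_zero_of_notMem_range, mul_zero]
    rintro ⟨b', hb'⟩
    exact ha' (congrArg Prod.fst hb')

end PMF

theorem dp_adaptive_composition_general {X R₁ R₂ : Type*}
    (Adj : X → X → Prop) (ε₁ ε₂ : ℝ)
    (M₁ : X → PMF R₁) (M₂ : X → R₁ → PMF R₂)
    (h₁ : IsDP Adj ε₁ M₁) (h₂ : ∀ r₁ : R₁, IsDP Adj ε₂ (fun x => M₂ x r₁)) :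
    IsDP Adj (ε₁ + ε₂)
      (fun x => (M₁ x).bind (fun r₁ => (M₂ x r₁).map (fun r₂ => (r₁, r₂)))) := by
  rintro x y hxy ⟨r₁, r₂⟩
  simp only [PMF.bind_map_prodMk_apply]
  rw [Real.exp_add, ENNReal.ofReal_mul (Real.exp_nonneg _), mul_mul_mul_comm]
  exact mul_le_mul' (h₁ x y hxy r₁) (h₂ r₁ x y hxy r₂)

/-- Adaptive (sequential) composition: if `M₁` is `ε₁`-DP and, for every fixed
prior output `r₁`, the mechanism `x ↦ M₂ x r₁` is `ε₂`-DP, then the adaptive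
composition is `(ε₁ + ε₂)`-DP. -/
theorem dp_adaptive_composition {X R₁ R₂ : Type*} [Countable R₁] [Countable R₂]
    (Adj : X → X → Prop) (ε₁ ε₂ : ℝ) (hε₁ : 0 ≤ ε₁) (hε₂ : 0 ≤ ε₂)
    (M₁ : X → PMF R₁) (M₂ : X → R₁ → PMF R₂)
    (h₁ : IsDP Adj ε₁ M₁) (h₂ : ∀ r₁ : R₁, IsDP Adj ε₂ (fun x => M₂ x r₁)) :
    IsDP Adj (ε₁ + ε₂)
      (fun x => (M₁ x).bind (fun r₁ => (M₂ x r₁).map (fun r₂ => (r₁, r₂)))) :=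
  dp_adaptive_composition_general Adj ε₁ ε₂ M₁ M₂ h₁ h₂
end
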